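/- Let p, q be real numbers with 2 < p < q, set a = 1/p, m = q/p, and Φ(x) = x^{mp} − m·x^p + m − 1 for x > 0. Then for every x > 0 with Φ'(x) ≠ 0, writing y = x^p and z = y^{m−1}: (x⁴/q²)·Φ'(x)⁴ · (Φ/Φ'²)''(x) = p²·y²·f(a, m, y, z), where (Φ/Φ'²)'' is the second derivative of x ↦ Φ(x)/Φ'(x)² and f is as defined in the context. -/

import Mathlib

open Set Real

/-- The polynomial `f` from Lemma 5.4. -/
noncomputable def polyF (a m y z : ℝ) : ℝ :=
  -3 * m * y * (z - 1) ^ 2 * (m * z - 1)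
    + 2 * (m - 1 - m * y + y * z) * (2 + (1 - 6 * m + m ^ 2) * z + 2 * m ^ 2 * z ^ 2)
    + a * (3 * m * y * (z - 1) ^ 3
        - 6 * (z - 1) * (m * z - 1) * (m - 1 - m * y + y * z))
    + 2 * a ^ 2 * (z - 1) ^ 2 * (m - 1 - m * y + y * z)

set_option maxHeartbeats 1000000 in
/-- Lemma 5.4: for `2 < p < q`, `a = 1/p`, `m = q/p`,
`Φ(x) = x^{mp} − m x^p + m − 1`, and every `x > 0` with `Φ'(x) ≠ 0`, writing
`y = x^p`, `z = y^{m−1}`: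
`(x⁴/q²) Φ'(x)⁴ (Φ/Φ'²)''(x) = p² y² f(a,m,y,z)`. -/
theorem phi_second_derivative_identity
    (p q : ℝ) (hp : 2 < p) (hpq : p < q)
    (Φ : ℝ → ℝ)
    (hΦ : ∀ x : ℝ, 0 < x → Φ x = x ^ (q / p * p) - q / p * x ^ p + q / p - 1) :
    ∀ x : ℝ, 0 < x → deriv Φ x ≠ 0 →
      x ^ 4 / q ^ 2 * (deriv Φ x) ^ 4 *
          deriv (deriv (fun t => Φ t / (deriv Φ t) ^ 2)) x =
        p ^ 2 * (x ^ p) ^ 2 *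
          polyF (1 / p) (q / p) (x ^ p) ((x ^ p) ^ (q / p - 1)) := by
  have hp0 : (0:ℝ) < p := by linarith
  have hq0 : (0:ℝ) < q := by linarith
  have hpne : p ≠ 0 := ne_of_gt hp0
  have hqne : q ≠ 0 := ne_of_gt hq0
  have hqp : q / p * p = q := div_mul_cancel₀ q hpne
  set P : ℝ → ℝ := fun t => t ^ q - q / p * t ^ p + q / p - 1 with hPdef
  set D : ℝ → ℝ := fun t => q * t ^ (q - 1) - q * t ^ (p - 1) with hDdef
  set D1 : ℝ → ℝ := fun t => q * (q - 1) * t ^ (q - 2) - q * (p - 1) * t ^ (p - 2) with hD1def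
  set D2 : ℝ → ℝ := fun t => q * (q - 1) * (q - 2) * t ^ (q - 3)
      - q * (p - 1) * (p - 2) * t ^ (p - 3) with hD2def
  -- derivative facts
  have hP : ∀ t : ℝ, 0 < t → HasDerivAt P (D t) t := by
    intro t ht
    have h1 : HasDerivAt (fun s : ℝ => s ^ q) (q * t ^ (q - 1)) t :=
      Real.hasDerivAt_rpow_const (Or.inl ht.ne')
    have h2 : HasDerivAt (fun s : ℝ => q / p * s ^ p) (q / p * (p * t ^ (p - 1))) t :=
      (Real.hasDerivAt_rpow_const (Or.inl ht.ne')).const_mul _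
    have h3 := ((h1.sub h2).add_const (q / p)).sub_const 1
    have : q * t ^ (q - 1) - q / p * (p * t ^ (p - 1)) = D t := by
      rw [hDdef]; field_simp
    rw [this] at h3
    exact h3
  have hD : ∀ t : ℝ, 0 < t → HasDerivAt D (D1 t) t := by
    intro t ht
    have h1 : HasDerivAt (fun s : ℝ => q * s ^ (q - 1)) (q * ((q-1) * t ^ (q - 1 - 1))) t :=
      (Real.hasDerivAt_rpow_const (Or.inl ht.ne')).const_mul _
    have h2 : HasDerivAt (fun s : ℝ => q * s ^ (p - 1)) (q * ((p-1) * t ^ (p - 1 - 1))) t :=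
      (Real.hasDerivAt_rpow_const (Or.inl ht.ne')).const_mul _
    have h3 := h1.sub h2
    have e1 : q - 1 - 1 = q - 2 := by ring
    have e2 : p - 1 - 1 = p - 2 := by ring
    rw [e1, e2] at h3
    have : q * ((q-1) * t ^ (q - 2)) - q * ((p-1) * t ^ (p - 2)) = D1 t := by
      rw [hD1def]; ring
    rw [this] at h3
    exact h3
  have hD1 : ∀ t : ℝ, 0 < t → HasDerivAt D1 (D2 t) t := by
    intro t ht
    have h1 : HasDerivAt (fun s : ℝ => q * (q-1) * s ^ (q - 2))
        (q * (q-1) * ((q-2) * t ^ (q - 2 - 1))) t :=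
      (Real.hasDerivAt_rpow_const (Or.inl ht.ne')).const_mul _
    have h2 : HasDerivAt (fun s : ℝ => q * (p-1) * s ^ (p - 2))
        (q * (p-1) * ((p-2) * t ^ (p - 2 - 1))) t :=
      (Real.hasDerivAt_rpow_const (Or.inl ht.ne')).const_mul _
    have h3 := h1.sub h2
    have e1 : q - 2 - 1 = q - 3 := by ring
    have e2 : p - 2 - 1 = p - 3 := by ring
    rw [e1, e2] at h3
    have : q * (q-1) * ((q-2) * t ^ (q - 3)) - q * (p-1) * ((p-2) * t ^ (p - 3)) = D2 t := by
      rw [hD2def]; ring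
    rw [this] at h3
    exact h3
  have hΦP : ∀ t : ℝ, 0 < t → Φ t = P t := by
    intro t ht; rw [hΦ t ht, hqp, hPdef]
  have hΦev : ∀ t : ℝ, 0 < t → Φ =ᶠ[nhds t] P := by
    intro t ht
    filter_upwards [isOpen_Ioi.mem_nhds (show t ∈ Ioi (0:ℝ) from ht)] with s hs
    exact hΦP s hs
  have hΦd : ∀ t : ℝ, 0 < t → HasDerivAt Φ (D t) t := fun t ht =>
    (hP t ht).congr_of_eventuallyEq (hΦev t ht)
  have hderiv : ∀ t : ℝ, 0 < t → deriv Φ t = D t := fun t ht => (hΦd t ht).deriv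
  intro x hx hD0
  have hDx : D x ≠ 0 := by rw [← hderiv x hx]; exact hD0
  -- first derivative of G on the good set
  have hG1 : ∀ t : ℝ, 0 < t → D t ≠ 0 →
      HasDerivAt (fun s => Φ s / (deriv Φ s) ^ 2)
        ((D t ^ 2 - 2 * P t * D1 t) / D t ^ 3) t := by
    intro t ht hDt
    have hnum := hP t ht
    have hden : HasDerivAt (fun s => D s ^ 2) ((2:ℕ) * D t ^ (2-1) * D1 t) t :=
      (hD t ht).pow 2
    have h := hnum.div hden (pow_ne_zero 2 hDt)
    have hval : (D t * D t ^ 2 - P t * ((2:ℕ) * D t ^ (2-1) * D1 t)) / (D t ^ 2) ^ 2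
        = (D t ^ 2 - 2 * P t * D1 t) / D t ^ 3 := by
      field_simp
      ring
    rw [hval] at h
    refine h.congr_of_eventuallyEq ?_
    filter_upwards [isOpen_Ioi.mem_nhds (show t ∈ Ioi (0:ℝ) from ht)] with s hs
    rw [hΦP s hs, hderiv s hs]; rfl
  -- second derivative value
  have hN : HasDerivAt (fun s => D s ^ 2 - 2 * P s * D1 s)
      (2 * D x * D1 x - (2 * D x * D1 x + 2 * P x * D2 x)) x := by
    have h1 : HasDerivAt (fun s => D s ^ 2) ((2:ℕ) * D x ^ (2-1) * D1 x) x :=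
      (hD x hx).pow 2
    have h2 : HasDerivAt (fun s => 2 * P s * D1 s)
        (2 * D x * D1 x + 2 * P x * D2 x) x := by
      have := ((hP x hx).const_mul 2).mul (hD1 x hx)
      exact this
    have h3 := h1.sub h2
    exact h3.congr_deriv (by norm_num)
  have hDen : HasDerivAt (fun s => D s ^ 3) (3 * D x ^ 2 * D1 x) x := by
    have := (hD x hx).pow 3
    exact this.congr_deriv (by norm_num)
  have hG2 : HasDerivAt (fun t => (D t ^ 2 - 2 * P t * D1 t) / D t ^ 3)
      (((2 * D x * D1 x - (2 * D x * D1 x + 2 * P x * D2 x)) * D x ^ 3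
          - (D x ^ 2 - 2 * P x * D1 x) * (3 * D x ^ 2 * D1 x)) / (D x ^ 3) ^ 2) x :=
    hN.div hDen (pow_ne_zero 3 hDx)
  have hU : ∀ᶠ t in nhds x, 0 < t ∧ D t ≠ 0 :=
    (eventually_gt_nhds hx).and ((hD x hx).continuousAt.eventually_ne hDx)
  have hev : deriv (fun s => Φ s / (deriv Φ s) ^ 2)
      =ᶠ[nhds x] fun t => (D t ^ 2 - 2 * P t * D1 t) / D t ^ 3 := by
    filter_upwards [hU] with t ht
    exact (hG1 t ht.1 ht.2).deriv
  have hval : deriv (deriv (fun t => Φ t / (deriv Φ t) ^ 2)) x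
      = ((2 * D x * D1 x - (2 * D x * D1 x + 2 * P x * D2 x)) * D x ^ 3
          - (D x ^ 2 - 2 * P x * D1 x) * (3 * D x ^ 2 * D1 x)) / (D x ^ 3) ^ 2 := by
    rw [hev.deriv_eq, hG2.deriv]
  rw [hval, hderiv x hx]
  have hcancel : x ^ 4 / q ^ 2 * D x ^ 4 *
      (((2 * D x * D1 x - (2 * D x * D1 x + 2 * P x * D2 x)) * D x ^ 3
          - (D x ^ 2 - 2 * P x * D1 x) * (3 * D x ^ 2 * D1 x)) / (D x ^ 3) ^ 2)
      = x ^ 4 / q ^ 2 * (6 * P x * D1 x ^ 2 - 2 * P x * D x * D2 x - 3 * D x ^ 2 * D1 x) := by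
    field_simp
    ring
  rw [hcancel]
  -- now pure algebra with rpow identities
  have hxne : x ≠ 0 := hx.ne'
  have r2 : x ^ (2:ℝ) = x ^ (2:ℕ) := by
    rw [show (2:ℝ) = ((2:ℕ):ℝ) by norm_num, Real.rpow_natCast]
  have r3 : x ^ (3:ℝ) = x ^ (3:ℕ) := by
    rw [show (3:ℝ) = ((3:ℕ):ℝ) by norm_num, Real.rpow_natCast]
  have hpq' : p + (q - p) = q := by ring
  have eq1 : x ^ q = x ^ p * x ^ (q - p) := by
    rw [← Real.rpow_add hx, hpq']
  have e2 : x ^ (q - 1) = x ^ p * x ^ (q - p) / x := by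
    rw [Real.rpow_sub hx, eq1, Real.rpow_one]
  have e3 : x ^ (p - 1) = x ^ p / x := by
    rw [Real.rpow_sub hx, Real.rpow_one]
  have e4 : x ^ (q - 2) = x ^ p * x ^ (q - p) / x ^ (2:ℕ) := by
    rw [Real.rpow_sub hx, eq1, r2]
  have e5 : x ^ (p - 2) = x ^ p / x ^ (2:ℕ) := by
    rw [Real.rpow_sub hx, r2]
  have e6 : x ^ (q - 3) = x ^ p * x ^ (q - p) / x ^ (3:ℕ) := by
    rw [Real.rpow_sub hx, eq1, r3]
  have e7 : x ^ (p - 3) = x ^ p / x ^ (3:ℕ) := by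
    rw [Real.rpow_sub hx, r3]
  have e0 : (x ^ p) ^ (q / p - 1) = x ^ (q - p) := by
    rw [← Real.rpow_mul hx.le, show p * (q / p - 1) = q - p by field_simp; try ring]
  rw [hPdef, hDdef, hD1def, hD2def]
  simp only
  rw [eq1, e2, e3, e4, e5, e6, e7, e0, polyF]
  field_simp
  ring
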